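/- arXiv:2211.03444 — 5 statements merged into one kernel-verified Lean document; each statement's English description precedes it below -/
import Mathlib

section
/- Let α ∈ (0,1] and let Σ : ℝ → ℝ be continuous, lower bounded, and locally α-Hölder continuous. Then the set D := { f : ℝ → ℝ : f is C¹, f is bounded, f' is locally α-Hölder continuous, and the function x ↦ f'(x) e^{Σ(x)} is C¹ } is dense in C¹(ℝ) for the topology of uniform convergence on compact sets of functions together with their first derivatives; that is, for every C¹ function f : ℝ → ℝ there is a sequence (f_N) in D with f_N → f and f_N' → f' uniformly on every compact subset of ℝ. -/
open MeasureTheory Set Filter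

/-- `g` is locally `α`-Hölder continuous. -/
def LocHolder (α : ℝ) (g : ℝ → ℝ) : Prop :=
  ∀ M > (0:ℝ), ∃ C : ℝ, ∀ y z : ℝ, |y| ≤ M → |z| ≤ M → |g y - g z| ≤ C * |y - z| ^ α

private lemma poly_contDiff (p : Polynomial ℝ) : ContDiff ℝ 1 (fun x : ℝ => p.eval x) := by
  induction p using Polynomial.induction_on' with
  | add p q hp hq => simpa [Polynomial.eval_add] using hp.add hq
  | monomial n a =>
      simpa [Polynomial.eval_monomial] using (contDiff_const (c := a)).mul (contDiff_id.pow n)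

private lemma exp_sub_exp_le {a b c : ℝ} (hb : b ≤ c) (h : a ≤ b) :
    Real.exp b - Real.exp a ≤ Real.exp c * (b - a) := by
  have h1 : 1 - Real.exp (a - b) ≤ b - a := by
    have := Real.add_one_le_exp (a - b); linarith
  have h2 : Real.exp b - Real.exp a = Real.exp b * (1 - Real.exp (a - b)) := by
    rw [mul_sub, mul_one, ← Real.exp_add]; ring_nf
  have h3 : Real.exp b ≤ Real.exp c := Real.exp_le_exp.2 hb
  have h4 : (0:ℝ) ≤ b - a := by linarith
  have h5 : (0:ℝ) < Real.exp b := Real.exp_pos b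
  nlinarith

private lemma abs_exp_sub_exp {a b c : ℝ} (ha : a ≤ c) (hb : b ≤ c) :
    |Real.exp a - Real.exp b| ≤ Real.exp c * |a - b| := by
  rcases le_total a b with h | h
  · rw [abs_sub_comm, abs_of_nonneg (sub_nonneg.2 (Real.exp_le_exp.2 h)),
      abs_sub_comm, abs_of_nonneg (sub_nonneg.2 h)]
    exact exp_sub_exp_le hb h
  · rw [abs_of_nonneg (sub_nonneg.2 (Real.exp_le_exp.2 h)), abs_of_nonneg (sub_nonneg.2 h)]
    exact exp_sub_exp_le ha h

private lemma lin_le_rpow {α M d : ℝ} (hα0 : 0 < α) (hα1 : α ≤ 1) (hM : 0 < M)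
    (hd0 : 0 ≤ d) (hd : d ≤ 2 * M) : d ≤ (2 * M) ^ (1 - α) * d ^ α := by
  rcases eq_or_lt_of_le hd0 with h | h
  · rw [← h, Real.zero_rpow hα0.ne', mul_zero]
  · calc d = d ^ (1 - α) * d ^ α := by
          rw [← Real.rpow_add h]; norm_num
      _ ≤ (2 * M) ^ (1 - α) * d ^ α :=
          mul_le_mul_of_nonneg_right (Real.rpow_le_rpow hd0 hd (by linarith))
            (Real.rpow_nonneg hd0 _)

private lemma abs_intervalIntegral_le {φ : ℝ → ℝ} (hint : Integrable φ) (x : ℝ) :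
    |∫ t in (0:ℝ)..x, φ t| ≤ ∫ t, |φ t| := by
  have hnn : (0:ℝ → ℝ) ≤ᵐ[volume] fun t => |φ t| :=
    Eventually.of_forall fun t => abs_nonneg _
  rcases le_total (0:ℝ) x with h | h
  · rw [intervalIntegral.integral_of_le h]
    calc |∫ t in Set.Ioc 0 x, φ t| ≤ ∫ t in Set.Ioc 0 x, |φ t| := by
          simpa [Real.norm_eq_abs] using
            norm_integral_le_integral_norm (μ := volume.restrict (Set.Ioc 0 x)) φ
      _ ≤ ∫ t, |φ t| := setIntegral_le_integral hint.abs hnn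
  · rw [intervalIntegral.integral_of_ge h, abs_neg]
    calc |∫ t in Set.Ioc x 0, φ t| ≤ ∫ t in Set.Ioc x 0, |φ t| := by
          simpa [Real.norm_eq_abs] using
            norm_integral_le_integral_norm (μ := volume.restrict (Set.Ioc x 0)) φ
      _ ≤ ∫ t, |φ t| := setIntegral_le_integral hint.abs hnn

/-- Let `α ∈ (0,1]` and let `Σ : ℝ → ℝ` be continuous, lower bounded
and locally `α`-Hölder continuous.  Then the set
`D = { f : f is C¹, bounded, f' locally α-Hölder, and x ↦ f'(x) e^{Σ x} is C¹ }`
is dense in `C¹(ℝ)`: for every C¹ function `f` there is a sequence `(f_N)` in `D`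
with `f_N → f` and `f_N' → f'` uniformly on every compact subset of `ℝ`. -/
theorem stmt_2 (α : ℝ) (hα : α ∈ Set.Ioc (0:ℝ) 1) (S : ℝ → ℝ)
    (hScont : Continuous S) (hlb : ∃ m : ℝ, ∀ x, m ≤ S x) (hHolder : LocHolder α S)
    (f : ℝ → ℝ) (hf : ContDiff ℝ 1 f) :
    ∃ fN : ℕ → ℝ → ℝ,
      (∀ N, ContDiff ℝ 1 (fN N) ∧ (∃ C : ℝ, ∀ x, |fN N x| ≤ C) ∧
        LocHolder α (deriv (fN N)) ∧
        ContDiff ℝ 1 (fun x => deriv (fN N) x * Real.exp (S x))) ∧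
      (∀ K : Set ℝ, IsCompact K →
        TendstoUniformlyOn (fun N => fN N) f atTop K ∧
        TendstoUniformlyOn (fun N => deriv (fN N)) (deriv f) atTop K) := by
  obtain ⟨hα0, hα1⟩ := hα
  obtain ⟨m, hm⟩ := hlb
  have hf'cont : Continuous (deriv f) := (contDiff_one_iff_deriv.mp hf).2
  set g : ℝ → ℝ := fun x => deriv f x * Real.exp (S x) with hgdef
  have hgcont : Continuous g := hf'cont.mul (Real.continuous_exp.comp hScont)
  -- polynomials approximating g
  have hpoly : ∀ N : ℕ, ∃ p : Polynomial ℝ, ∀ x ∈ Set.Icc (-((N:ℝ)+1)) ((N:ℝ)+1),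
      |p.eval x - g x| < Real.exp m / ((N:ℝ)+1) := by
    intro N
    exact exists_polynomial_near_of_continuousOn _ _ g hgcont.continuousOn _
      (by positivity)
  choose p hp using hpoly
  -- bump functions
  have hbump : ∀ N : ℕ, ∃ b : ContDiffBump (0:ℝ), b.rIn = (N:ℝ)+1 ∧ b.rOut = (N:ℝ)+2 :=
    fun N => ⟨⟨(N:ℝ)+1, (N:ℝ)+2, by positivity, by linarith⟩, rfl, rfl⟩
  choose bump hbIn _hbOut using hbump
  set h : ℕ → ℝ → ℝ := fun N x => bump N x * (p N).eval x with hhdef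
  set φ : ℕ → ℝ → ℝ := fun N x => h N x * Real.exp (-(S x)) with hφdef
  have hhcont : ∀ N, Continuous (h N) := fun N =>
    (bump N).continuous.mul (p N).continuous
  have hhCD : ∀ N, ContDiff ℝ 1 (h N) := fun N =>
    ((bump N).contDiff).mul (poly_contDiff (p N))
  have hhsupp : ∀ N, HasCompactSupport (h N) := fun N =>
    (bump N).hasCompactSupport.mul_right
  have hφcont : ∀ N, Continuous (φ N) := fun N =>
    (hhcont N).mul (Real.continuous_exp.comp hScont.neg)
  have hφsupp : ∀ N, HasCompactSupport (φ N) := fun N =>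
    (hhsupp N).mul_right
  have hφint : ∀ N, Integrable (φ N) := fun N =>
    (hφcont N).integrable_of_hasCompactSupport (hφsupp N)
  set F : ℕ → ℝ → ℝ := fun N x => f 0 + ∫ t in (0:ℝ)..x, φ N t with hFdef
  have hder : ∀ N x, HasDerivAt (F N) (φ N x) x := fun N x =>
    (((hφcont N).integral_hasStrictDerivAt 0 x).hasDerivAt).const_add (f 0)
  have hderiv : ∀ N, deriv (F N) = φ N := fun N => funext fun x => (hder N x).deriv
  -- global bound on exp (-(S x))
  have hexpS : ∀ x, Real.exp (-(S x)) ≤ Real.exp (-m) := fun x =>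
    Real.exp_le_exp.2 (neg_le_neg (hm x))
  -- key estimate
  have key : ∀ N : ℕ, ∀ x : ℝ, |x| ≤ (N:ℝ)+1 →
      |φ N x - deriv f x| ≤ 1 / ((N:ℝ)+1) := by
    intro N x hx
    have hb1 : bump N x = 1 := by
      apply (bump N).one_of_mem_closedBall
      rw [Metric.mem_closedBall, Real.dist_eq, sub_zero, hbIn]
      exact hx
    have hgx : g x * Real.exp (-(S x)) = deriv f x := by
      rw [hgdef]
      rw [mul_assoc, ← Real.exp_add, add_neg_cancel, Real.exp_zero, mul_one]
    have : φ N x - deriv f x = ((p N).eval x - g x) * Real.exp (-(S x)) := by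
      rw [hφdef, ← hgx, hhdef]
      simp only [hb1, one_mul]
      ring
    rw [this, abs_mul, abs_of_nonneg (Real.exp_nonneg _)]
    have h1 : |(p N).eval x - g x| ≤ Real.exp m / ((N:ℝ)+1) :=
      le_of_lt (hp N x (Set.mem_Icc.mpr (abs_le.mp hx)))
    calc |(p N).eval x - g x| * Real.exp (-(S x))
        ≤ (Real.exp m / ((N:ℝ)+1)) * Real.exp (-m) := by
          apply mul_le_mul h1 (hexpS x) (Real.exp_nonneg _) (by positivity)
      _ = 1 / ((N:ℝ)+1) := by
          rw [div_mul_eq_mul_div, ← Real.exp_add, add_neg_cancel, Real.exp_zero]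
  refine ⟨F, fun N => ⟨?_, ?_, ?_, ?_⟩, ?_⟩
  · -- C¹
    exact contDiff_one_iff_deriv.mpr
      ⟨fun x => (hder N x).differentiableAt, by rw [hderiv N]; exact hφcont N⟩
  · -- bounded
    refine ⟨|f 0| + ∫ t, |φ N t|, fun x => ?_⟩
    calc |F N x| ≤ |f 0| + |∫ t in (0:ℝ)..x, φ N t| := abs_add_le _ _
      _ ≤ |f 0| + ∫ t, |φ N t| := by
          have := abs_intervalIntegral_le (hφint N) x; linarith
  · -- deriv locally Hölder
    rw [hderiv N]
    intro M hM
    obtain ⟨C, hC⟩ := hHolder M hM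
    obtain ⟨L, hL⟩ := ContDiff.lipschitzWith_of_hasCompactSupport (hhsupp N)
      (hhCD N) one_ne_zero
    obtain ⟨B, hB⟩ := (hhsupp N).exists_bound_of_continuous (hhcont N)
    have hB0 : (0:ℝ) ≤ B := le_trans (norm_nonneg _) (hB 0)
    set C' := max C 0 with hC'
    refine ⟨B * Real.exp (-m) * C' + Real.exp (-m) * L * (2*M) ^ (1-α),
      fun y z hy hz => ?_⟩
    have hrp : (0:ℝ) ≤ |y - z| ^ α := Real.rpow_nonneg (abs_nonneg _) _
    -- Hölder bound for exp(-(S ·))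
    have hek : |Real.exp (-(S y)) - Real.exp (-(S z))| ≤ Real.exp (-m) * (C' * |y - z| ^ α) := by
      calc |Real.exp (-(S y)) - Real.exp (-(S z))|
          ≤ Real.exp (-m) * |(-(S y)) - (-(S z))| :=
            abs_exp_sub_exp (neg_le_neg (hm y)) (neg_le_neg (hm z))
        _ = Real.exp (-m) * |S y - S z| := by rw [← abs_neg]; ring_nf
        _ ≤ Real.exp (-m) * (C * |y - z| ^ α) := by
            apply mul_le_mul_of_nonneg_left (hC y z hy hz) (Real.exp_nonneg _)
        _ ≤ Real.exp (-m) * (C' * |y - z| ^ α) := by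
            apply mul_le_mul_of_nonneg_left _ (Real.exp_nonneg _)
            exact mul_le_mul_of_nonneg_right (le_max_left _ _) hrp
    -- Lipschitz → Hölder for h N
    have hhk : |h N y - h N z| ≤ (L : ℝ) * ((2*M) ^ (1-α) * |y - z| ^ α) := by
      have h1 : |h N y - h N z| ≤ (L : ℝ) * |y - z| := by
        have := hL.dist_le_mul y z
        rwa [Real.dist_eq, Real.dist_eq] at this
      have h2 : |y - z| ≤ 2 * M := by
        calc |y - z| ≤ |y| + |z| := abs_sub _ _
          _ ≤ 2 * M := by linarith
      calc |h N y - h N z| ≤ (L:ℝ) * |y - z| := h1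
        _ ≤ (L:ℝ) * ((2*M) ^ (1-α) * |y - z| ^ α) := by
            apply mul_le_mul_of_nonneg_left _ L.coe_nonneg
            exact lin_le_rpow hα0 hα1 hM (abs_nonneg _) h2
    calc |φ N y - φ N z|
        = |h N y * (Real.exp (-(S y)) - Real.exp (-(S z)))
            + (h N y - h N z) * Real.exp (-(S z))| := by rw [hφdef]; ring_nf
      _ ≤ |h N y| * |Real.exp (-(S y)) - Real.exp (-(S z))|
            + |h N y - h N z| * Real.exp (-(S z)) := by
          refine le_trans (abs_add_le _ _) (add_le_add ?_ ?_)
          · rw [abs_mul]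
          · rw [abs_mul, abs_of_nonneg (Real.exp_nonneg _)]
      _ ≤ B * (Real.exp (-m) * (C' * |y - z| ^ α))
            + ((L:ℝ) * ((2*M) ^ (1-α) * |y - z| ^ α)) * Real.exp (-m) := by
          have hBy : |h N y| ≤ B := by simpa [Real.norm_eq_abs] using hB y
          apply add_le_add
          · exact mul_le_mul hBy hek (abs_nonneg _) hB0
          · exact mul_le_mul hhk (hexpS z) (Real.exp_nonneg _)
              (mul_nonneg L.coe_nonneg
                (mul_nonneg (Real.rpow_nonneg (by linarith) _) hrp))
      _ = (B * Real.exp (-m) * C' + Real.exp (-m) * L * (2*M) ^ (1-α)) * |y - z| ^ α := by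
          ring
  · -- deriv * exp(S) is C¹
    have : (fun x => deriv (F N) x * Real.exp (S x)) = h N := by
      funext x
      rw [hderiv N, hφdef]
      simp only
      rw [mul_assoc, ← Real.exp_add, neg_add_cancel, Real.exp_zero, mul_one]
    rw [this]
    exact hhCD N
  · -- convergence
    intro K hK
    obtain ⟨r, hr⟩ := hK.isBounded.subset_closedBall 0
    set R : ℝ := max r 0 with hR
    have hR0 : 0 ≤ R := le_max_right _ _
    have hxK : ∀ x ∈ K, |x| ≤ R := by
      intro x hx
      have := hr hx
      rw [Metric.mem_closedBall, Real.dist_eq, sub_zero] at this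
      exact le_trans this (le_max_left _ _)
    have hone : Tendsto (fun N : ℕ => 1 / ((N:ℝ)+1)) atTop (nhds 0) :=
      tendsto_one_div_add_atTop_nhds_zero_nat
    have hRtend : Tendsto (fun N : ℕ => R * (1 / ((N:ℝ)+1))) atTop (nhds 0) := by
      simpa using hone.const_mul R
    -- bound for F N x - f x on K, for N ≥ R
    have hFbound : ∀ N : ℕ, R ≤ (N:ℝ) → ∀ x ∈ K,
        |F N x - f x| ≤ R * (1 / ((N:ℝ)+1)) := by
      intro N hNR x hx
      have hfx : f x - f 0 = ∫ t in (0:ℝ)..x, deriv f t := by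
        rw [intervalIntegral.integral_deriv_eq_sub
          (fun t _ => (hf.differentiable one_ne_zero).differentiableAt)
          (hf'cont.intervalIntegrable 0 x)]
      have hdiff : F N x - f x = ∫ t in (0:ℝ)..x, (φ N t - deriv f t) := by
        rw [intervalIntegral.integral_sub ((hφint N).intervalIntegrable)
          (hf'cont.intervalIntegrable 0 x)]
        rw [hFdef]
        simp only
        linarith [hfx]
      rw [hdiff]
      have hb : ∀ t ∈ Set.uIoc (0:ℝ) x, ‖φ N t - deriv f t‖ ≤ 1 / ((N:ℝ)+1) := by
        intro t ht
        apply key N t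
        have h1 : t ≤ max 0 x := le_of_lt ht.1 |> fun _ => ht.2
        have h2 : min 0 x < t := ht.1
        have habs : |t| ≤ |x| := by
          rw [abs_le]
          constructor
          · calc -|x| ≤ min 0 x := le_min (by simp [abs_nonneg]) (neg_abs_le x)
              _ ≤ t := le_of_lt h2
          · calc t ≤ max 0 x := ht.2
              _ ≤ |x| := max_le (abs_nonneg x) (le_abs_self x)
        calc |t| ≤ |x| := habs
          _ ≤ R := hxK x hx
          _ ≤ (N:ℝ) + 1 := by linarith
      calc |∫ t in (0:ℝ)..x, (φ N t - deriv f t)|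
          ≤ (1 / ((N:ℝ)+1)) * |x - 0| :=
            intervalIntegral.norm_integral_le_of_norm_le_const hb
        _ ≤ (1 / ((N:ℝ)+1)) * R := by
            apply mul_le_mul_of_nonneg_left _ (by positivity)
            rw [sub_zero]; exact hxK x hx
        _ = R * (1 / ((N:ℝ)+1)) := by ring
    constructor
    · -- F N → f uniformly on K
      rw [Metric.tendstoUniformlyOn_iff]
      intro ε hε
      have h1 : ∀ᶠ N : ℕ in atTop, R * (1 / ((N:ℝ)+1)) < ε :=
        hRtend.eventually (gt_mem_nhds hε)
      have h2 : ∀ᶠ N : ℕ in atTop, R ≤ (N:ℝ) := by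
        filter_upwards [eventually_ge_atTop ⌈R⌉₊] with N hN
        exact le_trans (Nat.le_ceil R) (by exact_mod_cast hN)
      filter_upwards [h1, h2] with N h1 h2
      intro x hx
      rw [Real.dist_eq]
      calc |f x - F N x| = |F N x - f x| := abs_sub_comm _ _
        _ ≤ R * (1 / ((N:ℝ)+1)) := hFbound N h2 x hx
        _ < ε := h1
    · -- deriv F N → deriv f uniformly on K
      rw [Metric.tendstoUniformlyOn_iff]
      intro ε hε
      have h1 : ∀ᶠ N : ℕ in atTop, 1 / ((N:ℝ)+1) < ε :=
        hone.eventually (gt_mem_nhds hε)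
      have h2 : ∀ᶠ N : ℕ in atTop, R ≤ (N:ℝ) := by
        filter_upwards [eventually_ge_atTop ⌈R⌉₊] with N hN
        exact le_trans (Nat.le_ceil R) (by exact_mod_cast hN)
      filter_upwards [h1, h2] with N h1 h2
      intro x hx
      rw [Real.dist_eq, hderiv N]
      calc |deriv f x - φ N x| = |φ N x - deriv f x| := abs_sub_comm _ _
        _ ≤ 1 / ((N:ℝ)+1) := key N x (by
            calc |x| ≤ R := hxK x hx
              _ ≤ (N:ℝ)+1 := by linarith)
        _ < ε := h1
end

section
/- Let α ∈ (0,1], let Q be a transition kernel from ℝ to ℝ with Q(y,{0}) = 0 for all y, satisfying sup_{y ∈ ℝ} ∫_ℝ (1 ∧ |x|^{1+α}) Q(y,dx) < ∞ and such that y ↦ (1 ∧ |x|^{1+α}) Q(y,dx) is continuous in total variation norm. Let k : ℝ → ℝ be a truncation function with k(x) = x for |x| ≤ R. Let f : ℝ → ℝ be C¹, bounded, with f' locally α-Hölder continuous. Then for every y ∈ ℝ the function x ↦ f(y+x) - f(y) - k(x) f'(y) is Q(y,·)-integrable, and the function F^f : ℝ → ℝ defined by F^f(y) := ∫_ℝ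 (f(y+x) - f(y) - k(x) f'(y)) Q(y,dx) is continuous. -/
open MeasureTheory ProbabilityTheory Set Filter
open scoped ENNReal NNReal Topology

/-- The total variation norm of a signed measure on `ℝ` (valued in `ℝ≥0∞`). -/
noncomputable def varNorm (s : MeasureTheory.SignedMeasure ℝ) : ENNReal :=
  s.totalVariation Set.univ

lemma aux_abs_integral_sub_le (ν₁ ν₂ : Measure ℝ) [IsFiniteMeasure ν₁] [IsFiniteMeasure ν₂]
    (h : ℝ → ℝ) (hm : Measurable h) (C : ℝ) (hC : ∀ x, |h x| ≤ C) :
    |∫ x, h x ∂ν₁ - ∫ x, h x ∂ν₂| ≤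
      C * ((ν₁.toSignedMeasure - ν₂.toSignedMeasure).totalVariation univ).toReal := by
  set s := ν₁.toSignedMeasure - ν₂.toSignedMeasure with hs
  set p := s.toJordanDecomposition.posPart with hp
  set q := s.toJordanDecomposition.negPart with hq
  have hC0 : 0 ≤ C := le_trans (abs_nonneg _) (hC 0)
  have hkey : ν₁ + q = ν₂ + p := by
    ext A hA
    have h1 : s A = (ν₁ A).toReal - (ν₂ A).toReal := by
      rw [hs, VectorMeasure.sub_apply, Measure.toSignedMeasure_apply_measurable hA,
        Measure.toSignedMeasure_apply_measurable hA]
      rfl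
    have h2 : s A = (p A).toReal - (q A).toReal := by
      conv_lhs => rw [← s.toSignedMeasure_toJordanDecomposition]
      rw [JordanDecomposition.toSignedMeasure, Measure.toSignedMeasure_sub_apply hA]
      rfl
    have hfin : ∀ (μ : Measure ℝ) [IsFiniteMeasure μ], μ A ≠ ⊤ := fun μ _ =>
      (measure_lt_top μ A).ne
    have : (ν₁ A).toReal + (q A).toReal = (ν₂ A).toReal + (p A).toReal := by
      have := h1.symm.trans h2; linarith
    rw [Measure.add_apply, Measure.add_apply, ← ENNReal.toReal_add (hfin ν₁) (hfin q),
      ← ENNReal.toReal_add (hfin ν₂) (hfin p)] at *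
    exact (ENNReal.toReal_eq_toReal_iff' (by finiteness) (by finiteness)).mp this
  have hint : ∀ (μ : Measure ℝ) [IsFiniteMeasure μ], Integrable h μ := by
    intro μ _
    exact (integrable_const C).mono' hm.aestronglyMeasurable
      (Eventually.of_forall fun x => (Real.norm_eq_abs _ ▸ hC x))
  have heq : ∫ x, h x ∂ν₁ + ∫ x, h x ∂q = ∫ x, h x ∂ν₂ + ∫ x, h x ∂p := by
    rw [← integral_add_measure (hint ν₁) (hint q), ← integral_add_measure (hint ν₂) (hint p),
      hkey]
  have hbp : |∫ x, h x ∂p| ≤ C * (p univ).toReal := by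
    exact (Real.norm_eq_abs _).symm.le.trans <|
      norm_integral_le_of_norm_le_const (μ := p)
        (Eventually.of_forall fun x => (Real.norm_eq_abs (h x)) ▸ hC x)
  have hbq : |∫ x, h x ∂q| ≤ C * (q univ).toReal := by
    exact (Real.norm_eq_abs _).symm.le.trans <|
      norm_integral_le_of_norm_le_const (μ := q)
        (Eventually.of_forall fun x => (Real.norm_eq_abs (h x)) ▸ hC x)
  have htv : (s.totalVariation univ).toReal = (p univ).toReal + (q univ).toReal := by
    rw [SignedMeasure.totalVariation, Measure.add_apply,
      ENNReal.toReal_add (measure_lt_top p univ).ne (measure_lt_top q univ).ne]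
  calc |∫ x, h x ∂ν₁ - ∫ x, h x ∂ν₂| = |∫ x, h x ∂p - ∫ x, h x ∂q| := by
        congr 1; linarith
    _ ≤ |∫ x, h x ∂p| + |∫ x, h x ∂q| := abs_sub _ _
    _ ≤ C * (p univ).toReal + C * (q univ).toReal := add_le_add hbp hbq
    _ = C * (s.totalVariation univ).toReal := by rw [htv]; ring

lemma aux_keyBound (α : ℝ) (hα : α ∈ Set.Ioc (0:ℝ) 1) (k : ℝ → ℝ) (R : ℝ)
    (hR : 0 < R) (hR1 : R ≤ 1) (hkb : ∃ C : ℝ, ∀ x, |k x| ≤ C)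
    (hkx : ∀ x, |x| ≤ R → k x = x)
    (f : ℝ → ℝ) (hf : ContDiff ℝ 1 f) (hfb : ∃ C : ℝ, ∀ x, |f x| ≤ C)
    (hf' : LocHolder α (deriv f)) (M : ℝ) :
    ∃ C : ℝ, 0 ≤ C ∧ ∀ y x : ℝ, |y| ≤ M →
      |f (y + x) - f y - k x * deriv f y| ≤ C * min 1 (|x| ^ (1 + α)) := by
  obtain ⟨hα0, hα1⟩ := hα
  set M' := |M| + 1 with hM'
  have hMM' : M ≤ M' := le_trans (le_abs_self M) (by linarith)
  have hM'0 : (0:ℝ) < M' := by positivity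
  obtain ⟨CH, hCH⟩ := hf' M' hM'0
  set CH' := max CH 0 with hCH'
  obtain ⟨S, hS⟩ := (isCompact_Icc (a := -M') (b := M')).exists_bound_of_continuousOn
    ((hf.continuous_deriv le_rfl).continuousOn)
  set S' := max S 0 with hS'
  obtain ⟨Bf, hBf⟩ := hfb
  set Bf' := max Bf 0 with hBf'
  obtain ⟨Ck, hCk⟩ := hkb
  set Ck' := max Ck 0 with hCk'
  have hRpow : (0:ℝ) < R ^ (1 + α) := Real.rpow_pos_of_pos hR _
  set C := max CH' ((2 * Bf' + Ck' * S') / R ^ (1 + α)) with hC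
  have hC0 : 0 ≤ C := le_trans (le_max_right CH 0) (le_max_left _ _)
  refine ⟨C, hC0, fun y x hy => ?_⟩
  have hdf : Differentiable ℝ f := hf.differentiable one_ne_zero
  by_cases hx : |x| ≤ R
  · -- small x
    rw [hkx x hx]
    have hminx : min 1 (|x| ^ (1 + α)) = |x| ^ (1 + α) := by
      refine min_eq_right ?_
      exact Real.rpow_le_one (abs_nonneg x) (le_trans hx hR1) (by linarith)
    rw [hminx]
    -- MVT argument
    set φ : ℝ → ℝ := fun t => f (y + t * x) - t * (x * deriv f y) with hφ
    have hder : ∀ t ∈ Icc (0:ℝ) 1,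
        HasDerivWithinAt φ (x * (deriv f (y + t * x) - deriv f y)) (Icc 0 1) t := by
      intro t ht
      have h1 : HasDerivAt (fun t : ℝ => y + t * x) x t := by
        simpa using (hasDerivAt_id t).mul_const x |>.const_add y
      have h2 : HasDerivAt (fun t : ℝ => f (y + t * x)) (deriv f (y + t * x) * x) t :=
        (hdf (y + t * x)).hasDerivAt.comp t h1
      have h3 : HasDerivAt φ (deriv f (y + t * x) * x - x * deriv f y) t := by
        simpa [hφ, Pi.sub_def] using h2.sub ((hasDerivAt_id t).mul_const (x * deriv f y))
      have : deriv f (y + t * x) * x - x * deriv f y = x * (deriv f (y + t * x) - deriv f y) := by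
        ring
      rw [this] at h3
      exact h3.hasDerivWithinAt
    have hbound : ∀ t ∈ Ico (0:ℝ) 1, ‖x * (deriv f (y + t * x) - deriv f y)‖ ≤
        CH' * |x| ^ (1 + α) := by
      intro t ht
      have ht0 : 0 ≤ t := ht.1
      have ht1 : t ≤ 1 := le_of_lt ht.2
      have htx : |t * x| ≤ |x| := by
        rw [abs_mul, abs_of_nonneg ht0]
        nlinarith [abs_nonneg x]
      have hyx : |y + t * x| ≤ M' := by
        have : |y + t * x| ≤ |y| + |t * x| := abs_add_le _ _
        have hxR : |t * x| ≤ 1 := le_trans htx (le_trans hx hR1)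
        have : |y| ≤ |M| := le_trans hy (le_abs_self M)
        calc |y + t * x| ≤ |y| + |t * x| := abs_add_le _ _
          _ ≤ |M| + 1 := add_le_add this hxR
      have hy' : |y| ≤ M' := le_trans hy hMM'
      have hH := hCH (y + t * x) y hyx hy'
      have hsub : (y + t * x) - y = t * x := by ring
      rw [hsub] at hH
      have htxa : |t * x| ^ α ≤ |x| ^ α :=
        Real.rpow_le_rpow (abs_nonneg _) htx (le_of_lt hα0)
      have hd : |deriv f (y + t * x) - deriv f y| ≤ CH' * |x| ^ α := by
        calc |deriv f (y + t * x) - deriv f y| ≤ CH * |t * x| ^ α := hH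
          _ ≤ CH' * |t * x| ^ α := by
              apply mul_le_mul_of_nonneg_right (le_max_left _ _)
                (Real.rpow_nonneg (abs_nonneg _) _)
          _ ≤ CH' * |x| ^ α := by
              apply mul_le_mul_of_nonneg_left htxa (le_max_right _ _)
      rw [Real.norm_eq_abs, abs_mul]
      calc |x| * |deriv f (y + t * x) - deriv f y| ≤ |x| * (CH' * |x| ^ α) := by
            apply mul_le_mul_of_nonneg_left hd (abs_nonneg x)
        _ = CH' * (|x| * |x| ^ α) := by ring
        _ = CH' * |x| ^ (1 + α) := by
            congr 1
            rcases eq_or_lt_of_le (abs_nonneg x) with h0 | h0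
            · rw [← h0, Real.zero_rpow (by positivity), Real.zero_rpow (by positivity),
                mul_zero]
            · rw [Real.rpow_add h0, Real.rpow_one]
    have := norm_image_sub_le_of_norm_deriv_le_segment' hder hbound 1 (by norm_num)
    have hφ1 : φ 1 = f (y + x) - x * deriv f y := by simp [hφ]
    have hφ0 : φ 0 = f y := by simp [hφ]
    rw [hφ1, hφ0, Real.norm_eq_abs] at this
    calc |f (y + x) - f y - x * deriv f y|
        = |f (y + x) - x * deriv f y - f y| := by ring_nf
      _ ≤ CH' * |x| ^ (1 + α) * (1 - 0) := this
      _ = CH' * |x| ^ (1 + α) := by ring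
      _ ≤ C * |x| ^ (1 + α) := by
          apply mul_le_mul_of_nonneg_right (le_max_left _ _)
            (Real.rpow_nonneg (abs_nonneg _) _)
  · -- large x
    push_neg at hx
    have hmin : R ^ (1 + α) ≤ min 1 (|x| ^ (1 + α)) := by
      refine le_min ?_ ?_
      · exact Real.rpow_le_one (le_of_lt hR) hR1 (by linarith)
      · exact Real.rpow_le_rpow (le_of_lt hR) (le_of_lt hx) (by linarith)
    have hdy : |deriv f y| ≤ S' := by
      have : y ∈ Icc (-M') M' := by
        constructor <;> [linarith [abs_le.mp (le_trans hy hMM')] ;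
          linarith [abs_le.mp (le_trans hy hMM')]]
      exact le_trans (le_of_eq (Real.norm_eq_abs _).symm) (le_trans (hS y this) (le_max_left _ _))
    have hnum : |f (y + x) - f y - k x * deriv f y| ≤ 2 * Bf' + Ck' * S' := by
      have h1 : |f (y + x)| ≤ Bf' := le_trans (hBf _) (le_max_left _ _)
      have h2 : |f y| ≤ Bf' := le_trans (hBf _) (le_max_left _ _)
      have h3 : |k x * deriv f y| ≤ Ck' * S' := by
        rw [abs_mul]
        apply mul_le_mul (le_trans (hCk _) (le_max_left _ _)) hdy (abs_nonneg _)
          (le_max_right _ _)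
      calc |f (y + x) - f y - k x * deriv f y|
          ≤ |f (y + x) - f y| + |k x * deriv f y| := abs_sub _ _
        _ ≤ (|f (y + x)| + |f y|) + |k x * deriv f y| :=
            add_le_add (abs_sub _ _) le_rfl
        _ ≤ (Bf' + Bf') + Ck' * S' := add_le_add (add_le_add h1 h2) h3
        _ = 2 * Bf' + Ck' * S' := by ring
    have hnn : 0 ≤ 2 * Bf' + Ck' * S' := by
      have : (0:ℝ) ≤ Bf' := le_max_right _ _
      have h2 : (0:ℝ) ≤ Ck' := le_max_right _ _
      have h3 : (0:ℝ) ≤ S' := le_max_right _ _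
      positivity
    calc |f (y + x) - f y - k x * deriv f y| ≤ 2 * Bf' + Ck' * S' := hnum
      _ = ((2 * Bf' + Ck' * S') / R ^ (1 + α)) * R ^ (1 + α) := by
          field_simp
      _ ≤ ((2 * Bf' + Ck' * S') / R ^ (1 + α)) * min 1 (|x| ^ (1 + α)) := by
          apply mul_le_mul_of_nonneg_left hmin (by positivity)
      _ ≤ C * min 1 (|x| ^ (1 + α)) := by
          apply mul_le_mul_of_nonneg_right (le_max_right _ _)
          exact le_trans (le_of_lt hRpow) hmin

/-- Let `α ∈ (0,1]`, `Q` a transition kernel with `Q y {0} = 0`,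
`sup_y ∫ (1 ∧ |x|^{1+α}) Q(y,dx) < ∞`, and `y ↦ (1 ∧ |x|^{1+α}) Q(y,dx)` continuous in
total variation norm.  Let `k` be a truncation function with `k x = x` for `|x| ≤ R`,
and `f : ℝ → ℝ` C¹, bounded, with `f'` locally `α`-Hölder continuous.  Then for every
`y` the function `x ↦ f(y+x) - f(y) - k(x) f'(y)` is `Q(y,·)`-integrable, and
`F^f(y) := ∫ (f(y+x) - f(y) - k(x) f'(y)) Q(y,dx)` is continuous in `y`. -/
theorem stmt_5 (α : ℝ) (hα : α ∈ Set.Ioc (0:ℝ) 1)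
    (Q : Kernel ℝ ℝ) (hQ0 : ∀ y : ℝ, Q y ({0} : Set ℝ) = 0)
    (hKbdd : ∃ K : ℝ, ∀ y : ℝ,
      ∫⁻ x, ENNReal.ofReal (min 1 (|x| ^ (1 + α))) ∂(Q y) ≤ ENNReal.ofReal K)
    (hTV : ∀ (y : ℕ → ℝ) (y₀ : ℝ), Tendsto y atTop (nhds y₀) →
      Tendsto (fun n =>
          varNorm ((Q (y n) : Measure ℝ).withDensityᵥ (fun x => min 1 (|x| ^ (1 + α))) -
            (Q y₀ : Measure ℝ).withDensityᵥ (fun x => min 1 (|x| ^ (1 + α)))))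
        atTop (nhds 0))
    (k : ℝ → ℝ) (R : ℝ) (hR : 0 < R) (hR1 : R ≤ 1) (hkm : Measurable k)
    (hkb : ∃ C : ℝ, ∀ x, |k x| ≤ C) (hkx : ∀ x, |x| ≤ R → k x = x)
    (f : ℝ → ℝ) (hf : ContDiff ℝ 1 f) (hfb : ∃ C : ℝ, ∀ x, |f x| ≤ C)
    (hf' : LocHolder α (deriv f)) :
    (∀ y : ℝ, Integrable (fun x => f (y + x) - f y - k x * deriv f y) (Q y)) ∧
    Continuous (fun y => ∫ x, (f (y + x) - f y - k x * deriv f y) ∂(Q y)) := by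
  obtain ⟨K, hK⟩ := hKbdd
  set m : ℝ → ℝ := fun x => min 1 (|x| ^ (1 + α)) with hm_def
  have hα0 : (0:ℝ) < α := hα.1
  have hm_meas : Measurable m := by
    apply Measurable.min measurable_const
    exact measurable_abs.pow_const _
  have hm_nonneg : ∀ x, 0 ≤ m x := fun x =>
    le_min zero_le_one (Real.rpow_nonneg (abs_nonneg x) _)
  have hm_pos : ∀ x : ℝ, x ≠ 0 → 0 < m x := by
    intro x hx
    exact lt_min one_pos (Real.rpow_pos_of_pos (abs_pos.mpr hx) _)
  set g : ℝ → ℝ → ℝ := fun y x => f (y + x) - f y - k x * deriv f y with hg_def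
  have hg_meas : ∀ y, Measurable (g y) := by
    intro y
    exact ((hf.continuous.comp (continuous_add_left y)).measurable.sub measurable_const).sub
      (hkm.mul measurable_const)
  -- integrability of m wrt Q y
  have hm_int : ∀ y, Integrable m (Q y) := by
    intro y
    refine ⟨hm_meas.aestronglyMeasurable, ?_⟩
    rw [hasFiniteIntegral_iff_norm]
    calc ∫⁻ x, ENNReal.ofReal ‖m x‖ ∂(Q y)
        = ∫⁻ x, ENNReal.ofReal (m x) ∂(Q y) := by
          congr 1; funext x; rw [Real.norm_eq_abs, abs_of_nonneg (hm_nonneg x)]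
      _ ≤ ENNReal.ofReal K := hK y
      _ < ⊤ := ENNReal.ofReal_lt_top
  -- integrability of g y wrt Q y
  have hg_int : ∀ y, Integrable (g y) (Q y) := by
    intro y
    obtain ⟨C, hC0, hC⟩ := aux_keyBound α hα k R hR hR1 hkb hkx f hf hfb hf' |y|
    refine ((hm_int y).const_mul C).mono' (hg_meas y).aestronglyMeasurable ?_
    exact Eventually.of_forall fun x => by
      rw [Real.norm_eq_abs]; exact hC y x (le_refl _)
  refine ⟨hg_int, ?_⟩
  -- the finite measures μ y
  set μ : ℝ → Measure ℝ := fun y =>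
    (Q y).withDensity fun x => ((m x).toNNReal : ℝ≥0∞) with hμ_def
  have hμ_apply : ∀ y (A : Set ℝ), MeasurableSet A →
      μ y A = ∫⁻ x in A, ENNReal.ofReal (m x) ∂(Q y) := by
    intro y A hA
    rw [hμ_def]
    exact withDensity_apply _ hA
  have hμ_fin : ∀ y, IsFiniteMeasure (μ y) := by
    intro y
    constructor
    rw [hμ_apply y univ MeasurableSet.univ, setLIntegral_univ]
    exact lt_of_le_of_lt (hK y) ENNReal.ofReal_lt_top
  -- h
  set h : ℝ → ℝ → ℝ := fun y x => if x = 0 then 0 else g y x / m x with hh_def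
  have hh_meas : ∀ y, Measurable (h y) := by
    intro y
    exact Measurable.ite (measurableSet_eq) measurable_const ((hg_meas y).div hm_meas)
  have hh_bound : ∀ M, ∃ C : ℝ, 0 ≤ C ∧ ∀ y x, |y| ≤ M → |h y x| ≤ C := by
    intro M
    obtain ⟨C, hC0, hC⟩ := aux_keyBound α hα k R hR hR1 hkb hkx f hf hfb hf' M
    refine ⟨C, hC0, fun y x hy => ?_⟩
    rw [hh_def]
    by_cases hx : x = 0
    · simpa [hx] using hC0
    · simp only [if_neg hx]
      rw [abs_div, abs_of_nonneg (hm_nonneg x), div_le_iff₀ (hm_pos x hx)]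
      exact hC y x hy
  have hh_cont : ∀ x, Continuous fun y => h y x := by
    intro x
    by_cases hx : x = 0
    · simp only [hh_def, if_pos hx]
      exact continuous_const
    · simp only [hh_def, if_neg hx]
      have hc1 : Continuous fun y => f (y + x) := hf.continuous.comp (continuous_add_right x)
      have hc2 : Continuous (deriv f) := hf.continuous_deriv le_rfl
      exact ((hc1.sub hf.continuous).sub (continuous_const.mul hc2)).div_const (m x)
  -- transfer lemma
  have hF_eq : ∀ y, ∫ x, g y x ∂(Q y) = ∫ x, h y x ∂(μ y) := by
    intro y
    rw [hμ_def, integral_withDensity_eq_integral_smul (hm_meas.real_toNNReal)]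
    apply integral_congr_ae
    rw [Filter.EventuallyEq, ae_iff]
    apply measure_mono_null _ (hQ0 y)
    intro x hx
    simp only [mem_setOf_eq] at hx
    simp only [mem_singleton_iff]
    by_contra hx0
    apply hx
    simp only [hh_def, if_neg hx0, NNReal.smul_def, smul_eq_mul,
      Real.coe_toNNReal _ (hm_nonneg x)]
    rw [mul_div_cancel₀ _ (ne_of_gt (hm_pos x hx0))]
  -- withDensityᵥ identification
  have hsv : ∀ y, (Q y : Measure ℝ).withDensityᵥ m = (μ y).toSignedMeasure := by
    intro y
    haveI := hμ_fin y
    ext A hA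
    rw [withDensityᵥ_apply (hm_int y) hA, Measure.toSignedMeasure_apply_measurable hA,
      Measure.real, hμ_apply y A hA,
      integral_eq_lintegral_of_nonneg_ae (Eventually.of_forall hm_nonneg)
        hm_meas.aestronglyMeasurable.restrict]
  -- continuity
  rw [continuous_iff_seqContinuous]
  intro ys y₀ hys
  have hys_abs : Tendsto (fun n => |ys n|) atTop (𝓝 |y₀|) := hys.abs
  obtain ⟨M₀, hM₀⟩ := hys_abs.bddAbove_range
  set M := max M₀ |y₀| with hM_def
  have hyM : ∀ n, |ys n| ≤ M := fun n =>
    le_trans (hM₀ (mem_range_self n)) (le_max_left _ _)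
  have hy₀M : |y₀| ≤ M := le_max_right _ _
  obtain ⟨C, hC0, hC⟩ := hh_bound M
  haveI := hμ_fin y₀
  -- DCT term
  have hdct : Tendsto (fun n => ∫ x, h (ys n) x ∂(μ y₀)) atTop (𝓝 (∫ x, h y₀ x ∂(μ y₀))) := by
    apply tendsto_integral_of_dominated_convergence (fun _ => C)
      (fun n => (hh_meas (ys n)).aestronglyMeasurable) (integrable_const C)
    · intro n
      exact Eventually.of_forall fun x => by
        rw [Real.norm_eq_abs]; exact hC (ys n) x (hyM n)
    · exact Eventually.of_forall fun x => ((hh_cont x).tendsto y₀).comp hys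
  -- TV term
  have htv := hTV ys y₀ hys
  have htvr : Tendsto (fun n =>
      (((μ (ys n)).toSignedMeasure - (μ y₀).toSignedMeasure).totalVariation univ).toReal)
      atTop (𝓝 0) := by
    have h1 : Tendsto (fun n =>
        (varNorm ((Q (ys n) : Measure ℝ).withDensityᵥ m -
          (Q y₀ : Measure ℝ).withDensityᵥ m)).toReal) atTop (𝓝 (0 : ℝ≥0∞).toReal) :=
      (ENNReal.tendsto_toReal (by simp)).comp htv
    simp only [ENNReal.toReal_zero] at h1
    convert h1 using 2 with n
    rw [varNorm, hsv (ys n), hsv y₀]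
  -- squeeze
  have key : ∀ n, |(∫ x, g (ys n) x ∂(Q (ys n))) - ∫ x, g y₀ x ∂(Q y₀)| ≤
      C * (((μ (ys n)).toSignedMeasure - (μ y₀).toSignedMeasure).totalVariation univ).toReal +
      |(∫ x, h (ys n) x ∂(μ y₀)) - ∫ x, h y₀ x ∂(μ y₀)| := by
    intro n
    haveI := hμ_fin (ys n)
    rw [hF_eq, hF_eq]
    have h1 := aux_abs_integral_sub_le (μ (ys n)) (μ y₀) (h (ys n)) (hh_meas (ys n)) C
      (fun x => hC (ys n) x (hyM n))
    calc |(∫ x, h (ys n) x ∂(μ (ys n))) - ∫ x, h y₀ x ∂(μ y₀)|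
        = |((∫ x, h (ys n) x ∂(μ (ys n))) - ∫ x, h (ys n) x ∂(μ y₀)) +
            ((∫ x, h (ys n) x ∂(μ y₀)) - ∫ x, h y₀ x ∂(μ y₀))| := by ring_nf
      _ ≤ _ := le_trans (abs_add_le _ _) (add_le_add h1 (le_refl _))
  have hb2 : Tendsto (fun n => |(∫ x, h (ys n) x ∂(μ y₀)) - ∫ x, h y₀ x ∂(μ y₀)|)
      atTop (𝓝 0) := by
    have := (hdct.sub_const (∫ x, h y₀ x ∂(μ y₀))).abs
    simpa using this
  have hrhs : Tendsto (fun n =>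
      C * (((μ (ys n)).toSignedMeasure - (μ y₀).toSignedMeasure).totalVariation univ).toReal +
      |(∫ x, h (ys n) x ∂(μ y₀)) - ∫ x, h y₀ x ∂(μ y₀)|) atTop (𝓝 0) := by
    have := (htvr.const_mul C).add hb2
    simpa using this
  have hsq := squeeze_zero (fun n => abs_nonneg _) key hrhs
  rw [tendsto_iff_dist_tendsto_zero]
  simpa only [Function.comp, Real.dist_eq] using hsq
end

section
/- Let α ∈ (0,1], let Q be a transition kernel from ℝ to ℝ with Q(y,{0}) = 0 for all y, satisfying sup_{y ∈ ℝ} ∫_ℝ (1 ∧ |x|^{1+α}) Q(y,dx) < ∞, and let k be a truncation function with k(x) = x on [-R,R]. Suppose (f_n) is a sequence of bounded C¹ functions ℝ → ℝ with f_n' locally α-Hölder continuous, such that ‖f_n‖_∞ → 0 and, for every R' > 0, ‖f_n'‖_{α,R'} → 0 as n → ∞. Then for every M > 0, sup_{|y| ≤ M} |F^{f_n}(y)| → 0 as n → ∞, where F^{f}(y) := ∫_ℝ (f(y+x) - f(y) - k(x) f'(y)) Q(y,dx). In other words, the linear map f ↦ F^f is continuous from this function class into the space of continuous functions with the topology of uniform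 convergence on compact sets. -/
open MeasureTheory ProbabilityTheory Set Filter

/-- Let `α ∈ (0,1]`, `Q` a transition kernel with `Q y {0} = 0` and
`sup_y ∫ (1 ∧ |x|^{1+α}) Q(y,dx) < ∞`, and `k` a truncation function with `k x = x`
on `[-R,R]`.  Suppose `(f_n)` is a sequence of bounded C¹ functions with `f_n'`
locally `α`-Hölder, such that `‖f_n‖_∞ → 0` and, for every `R' > 0`,
`‖f_n'‖_{α,R'} → 0` (both the Hölder seminorm on `[-R',R']` and the sup of `|f_n'|`
on `[-R',R']` tend to `0`).  Then for every `M > 0`,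
`sup_{|y|≤M} |F^{f_n}(y)| → 0`, where
`F^f(y) := ∫ (f(y+x) - f(y) - k(x) f'(y)) Q(y,dx)`;
i.e. `f ↦ F^f` is continuous into the space of continuous functions with the topology
of uniform convergence on compact sets. -/
theorem stmt_7 (α : ℝ) (hα : α ∈ Set.Ioc (0:ℝ) 1)
    (Q : Kernel ℝ ℝ) (hQ0 : ∀ y : ℝ, Q y ({0} : Set ℝ) = 0)
    (hKbdd : ∃ K : ℝ, ∀ y : ℝ,
      ∫⁻ x, ENNReal.ofReal (min 1 (|x| ^ (1 + α))) ∂(Q y) ≤ ENNReal.ofReal K)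
    (k : ℝ → ℝ) (R : ℝ) (hR : 0 < R) (hR1 : R ≤ 1) (hkm : Measurable k)
    (hkb : ∃ C : ℝ, ∀ x, |k x| ≤ C) (hkx : ∀ x, |x| ≤ R → k x = x)
    (f : ℕ → ℝ → ℝ) (hf : ∀ n, ContDiff ℝ 1 (f n))
    (hfb : ∀ n, ∃ C : ℝ, ∀ x, |f n x| ≤ C)
    (hf' : ∀ n, LocHolder α (deriv (f n)))
    (hsup0 : ∀ ε > (0:ℝ), ∃ N : ℕ, ∀ n ≥ N, ∀ x : ℝ, |f n x| ≤ ε)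
    (hhol0 : ∀ R' > (0:ℝ), ∀ ε > (0:ℝ), ∃ N : ℕ, ∀ n ≥ N,
      (∀ x y : ℝ, |x| ≤ R' → |y| ≤ R' →
        |deriv (f n) x - deriv (f n) y| ≤ ε * |x - y| ^ α) ∧
      (∀ x : ℝ, |x| ≤ R' → |deriv (f n) x| ≤ ε)) :
    ∀ M > (0:ℝ), ∀ ε > (0:ℝ), ∃ N : ℕ, ∀ n ≥ N, ∀ y : ℝ, |y| ≤ M →
      |∫ x, (f n (y + x) - f n y - k x * deriv (f n) y) ∂(Q y)| ≤ ε := by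
  obtain ⟨K₀, hK⟩ := hKbdd
  obtain ⟨Ck₀, hCk₀⟩ := hkb
  set Ck := max Ck₀ 0 with hCkdef
  have hCk : ∀ x, |k x| ≤ Ck := fun x => (hCk₀ x).trans (le_max_left _ _)
  have hCk0 : (0:ℝ) ≤ Ck := le_max_right _ _
  set K' := max K₀ 1 with hK'def
  have hK'1 : (1:ℝ) ≤ K' := le_max_right _ _
  have hK'pos : (0:ℝ) < K' := lt_of_lt_of_le one_pos hK'1
  have hK' : ∀ y, ∫⁻ x, ENNReal.ofReal (min 1 (|x| ^ (1 + α))) ∂(Q y) ≤ ENNReal.ofReal K' :=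
    fun y => (hK y).trans (ENNReal.ofReal_le_ofReal (le_max_left _ _))
  have hα0 : (0:ℝ) < α := hα.1
  have h1α : (0:ℝ) < 1 + α := by linarith
  have hRpow : (0:ℝ) < R ^ (1 + α) := Real.rpow_pos_of_pos hR _
  intro M hM ε hε
  have hcoef1 : (1:ℝ) ≤ 1 + (2 + Ck) / R ^ (1 + α) := by
    have : (0:ℝ) ≤ (2 + Ck) / R ^ (1 + α) := by positivity
    linarith
  set D : ℝ := (1 + (2 + Ck) / R ^ (1 + α)) * K' with hDdef
  have hDpos : (0:ℝ) < D := mul_pos (lt_of_lt_of_le one_pos hcoef1) hK'pos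
  set ε' := ε / D with hε'def
  have hε'pos : (0:ℝ) < ε' := div_pos hε hDpos
  obtain ⟨N₁, hN₁⟩ := hsup0 ε' hε'pos
  obtain ⟨N₂, hN₂⟩ := hhol0 (M + 1) (by linarith) ε' hε'pos
  refine ⟨max N₁ N₂, fun n hn y hy => ?_⟩
  have hn1 := hN₁ n (le_trans (le_max_left _ _) hn)
  obtain ⟨hhol, hder⟩ := hN₂ n (le_trans (le_max_right _ _) hn)
  set c := deriv (f n) y with hc
  have hyM1 : |y| ≤ M + 1 := by linarith
  have hcb : |c| ≤ ε' := hder y hyM1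
  set C : ℝ := ε' * (1 + (2 + Ck) / R ^ (1 + α)) with hCdef
  have hC0 : (0:ℝ) ≤ C := by positivity
  -- pointwise bound
  have hpt : ∀ x : ℝ, |f n (y + x) - f n y - k x * c| ≤ C * min 1 (|x| ^ (1 + α)) := by
    intro x
    rcases le_or_gt |x| R with hxR | hxR
    · -- small x
      have hkx' : k x = x := hkx x hxR
      have hx1 : |x| ≤ 1 := hxR.trans hR1
      have hmin : min 1 (|x| ^ (1 + α)) = |x| ^ (1 + α) :=
        min_eq_right (Real.rpow_le_one (abs_nonneg x) hx1 h1α.le)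
      rw [hkx', hmin]
      have key : |f n (y + x) - f n y - x * c| ≤ ε' * |x| ^ (1 + α) := by
        rcases eq_or_ne x 0 with rfl | hx0
        · simp [Real.zero_rpow h1α.ne']
        · have hxpos : (0:ℝ) < |x| := abs_pos.mpr hx0
          have hdiff : Differentiable ℝ (f n) := (hf n).differentiable one_ne_zero
          set s : Set ℝ := Set.Icc (-|x|) |x| with hsdef
          have hiv : ∀ t ∈ s, HasDerivWithinAt (fun t => f n (y + t) - t * c)
              (deriv (f n) (y + t) - c) s t := by
            intro t ht
            have h1 : HasDerivAt (fun t => f n (y + t)) (deriv (f n) (y + t)) t :=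
              HasDerivAt.comp_const_add y t ((hdiff (y + t)).hasDerivAt)
            have h2 : HasDerivAt (fun t : ℝ => t * c) c t := by
              simpa using (hasDerivAt_id t).mul_const c
            exact (h1.sub h2).hasDerivWithinAt
          have hbound : ∀ t ∈ s, ‖deriv (f n) (y + t) - c‖ ≤ ε' * |x| ^ α := by
            intro t ht
            have htabs : |t| ≤ |x| := abs_le.mpr ⟨ht.1, ht.2⟩
            have h1 : |y + t| ≤ M + 1 := by
              have h2 : |t| ≤ 1 := htabs.trans hx1
              calc |y + t| ≤ |y| + |t| := abs_add_le _ _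
                _ ≤ M + 1 := by linarith
            have h2 := hhol (y + t) y h1 hyM1
            rw [Real.norm_eq_abs, hc]
            calc |deriv (f n) (y + t) - deriv (f n) y| ≤ ε' * |y + t - y| ^ α := h2
              _ = ε' * |t| ^ α := by ring_nf
              _ ≤ ε' * |x| ^ α :=
                  mul_le_mul_of_nonneg_left (Real.rpow_le_rpow (abs_nonneg t) htabs hα0.le) hε'pos.le
          have hmem0 : (0:ℝ) ∈ s := by constructor <;> simp [hxpos.le] <;> linarith
          have hmemx : x ∈ s := by constructor <;> [exact neg_abs_le x; exact le_abs_self x]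
          have := (convex_Icc (-|x|) |x|).norm_image_sub_le_of_norm_hasDerivWithin_le
            hiv hbound hmem0 hmemx
          simp only [add_zero, zero_mul, sub_zero, Real.norm_eq_abs] at this
          calc |f n (y + x) - f n y - x * c|
              = |f n (y + x) - x * c - (f n y - 0 * c)| := by ring_nf
            _ ≤ ε' * |x| ^ α * |x - 0| := by
                simpa [Real.norm_eq_abs] using this
            _ = ε' * |x| ^ (1 + α) := by
                rw [Real.rpow_add hxpos, Real.rpow_one, sub_zero]; ring
      calc |f n (y + x) - f n y - x * c| ≤ ε' * |x| ^ (1 + α) := key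
        _ ≤ C * |x| ^ (1 + α) := by
            have hεC : ε' ≤ C := by rw [hCdef]; nlinarith [div_nonneg (by linarith : (0:ℝ) ≤ 2 + Ck) hRpow.le]
            exact mul_le_mul_of_nonneg_right hεC (Real.rpow_nonneg (abs_nonneg x) _)
    · -- large x
      have hminR : R ^ (1 + α) ≤ min 1 (|x| ^ (1 + α)) := by
        refine le_min (Real.rpow_le_one hR.le hR1 h1α.le) ?_
        exact Real.rpow_le_rpow hR.le hxR.le h1α.le
      have hb : |f n (y + x) - f n y - k x * c| ≤ (2 + Ck) * ε' := by
        have h1 : |f n (y + x) - f n y - k x * c| ≤ |f n (y + x)| + |f n y| + |k x| * |c| := by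
          calc |f n (y + x) - f n y - k x * c| ≤ |f n (y + x) - f n y| + |k x * c| := abs_sub _ _
            _ ≤ |f n (y + x)| + |f n y| + |k x| * |c| := by
                rw [abs_mul]; gcongr; exact abs_sub _ _
        have h2 := hn1 (y + x); have h3 := hn1 y
        have h4 : |k x| * |c| ≤ Ck * ε' :=
          mul_le_mul (hCk x) hcb (abs_nonneg c) hCk0
        nlinarith
      calc |f n (y + x) - f n y - k x * c| ≤ (2 + Ck) * ε' := hb
        _ = ε' * ((2 + Ck) / R ^ (1 + α)) * (R ^ (1 + α)) := by
            field_simp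
        _ ≤ ε' * ((2 + Ck) / R ^ (1 + α)) * min 1 (|x| ^ (1 + α)) :=
            mul_le_mul_of_nonneg_left hminR (by positivity)
        _ ≤ C * min 1 (|x| ^ (1 + α)) := by
            have hm0 : (0:ℝ) ≤ min 1 (|x| ^ (1 + α)) :=
              le_min zero_le_one (Real.rpow_nonneg (abs_nonneg x) _)
            have : ε' * ((2 + Ck) / R ^ (1 + α)) ≤ C := by
              rw [hCdef]; nlinarith
            exact mul_le_mul_of_nonneg_right this hm0
  -- integral bound
  have hlin : ∫⁻ x, ENNReal.ofReal ‖f n (y + x) - f n y - k x * c‖ ∂(Q y)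
      ≤ ENNReal.ofReal ε := by
    calc ∫⁻ x, ENNReal.ofReal ‖f n (y + x) - f n y - k x * c‖ ∂(Q y)
        ≤ ∫⁻ x, ENNReal.ofReal C * ENNReal.ofReal (min 1 (|x| ^ (1 + α))) ∂(Q y) := by
          refine lintegral_mono fun x => ?_
          rw [← ENNReal.ofReal_mul hC0]
          exact ENNReal.ofReal_le_ofReal (by simpa [Real.norm_eq_abs] using hpt x)
      _ = ENNReal.ofReal C * ∫⁻ x, ENNReal.ofReal (min 1 (|x| ^ (1 + α))) ∂(Q y) :=
          lintegral_const_mul' _ _ ENNReal.ofReal_ne_top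
      _ ≤ ENNReal.ofReal C * ENNReal.ofReal K' := mul_le_mul_right (hK' y) _
      _ = ENNReal.ofReal (C * K') := (ENNReal.ofReal_mul hC0).symm
      _ = ENNReal.ofReal ε := by
          congr 1
          rw [hCdef, hε'def, mul_assoc, ← hDdef]
          field_simp
  calc |∫ x, (f n (y + x) - f n y - k x * c) ∂(Q y)|
      = ‖∫ x, (f n (y + x) - f n y - k x * c) ∂(Q y)‖ := (Real.norm_eq_abs _).symm
    _ ≤ (∫⁻ x, ENNReal.ofReal ‖f n (y + x) - f n y - k x * c‖ ∂(Q y)).toReal :=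
        norm_integral_le_lintegral_norm _
    _ ≤ ε := ENNReal.toReal_le_of_le_ofReal hε.le hlin
end

section
/- Let α ∈ (0,1] and let Σ : ℝ → ℝ be bounded and α-Hölder continuous on all of ℝ with Hölder constant C₂, i.e. |Σ(u) - Σ(v)| ≤ C₂ |u - v|^α for all u, v ∈ ℝ. Define h(x) = ∫_{0}^{x} e^{-Σ(y)} dy. Then h is a C¹ bijection of ℝ, its inverse h⁻¹ is differentiable with (h⁻¹)'(u) = e^{Σ(h⁻¹(u))}, and for all u, v ∈ ℝ: |(h⁻¹)'(u) - (h⁻¹)'(v)| ≤ C₂ e^{(1+α)‖Σ‖_∞} |u - v|^α; that is, (h⁻¹)' is globally α-Hölder continuous with constant C₂ e^{(1+α)‖Σ‖_∞}. -/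
/-!
Since `h' = e^{-Σ} ≥ e^{-‖Σ‖_∞} > 0`, the map `h` expands distances by at least `e^{-‖Σ‖_∞}`;
hence it is a bijection whose inverse is `e^{‖Σ‖_∞}`-Lipschitz, with derivative
`1 / h'(h⁻¹ u) = e^{Σ(h⁻¹ u)}`. On `(-∞, ‖Σ‖_∞]` the exponential is `e^{‖Σ‖_∞}`-Lipschitz, so
`exp ∘ Σ` is `α`-Hölder with constant `e^{‖Σ‖_∞} C₂`, and composing with the Lipschitz map `h⁻¹`
multiplies that constant by `(e^{‖Σ‖_∞})^α`.
-/

open MeasureTheory Set Filter Function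

theorem continuous_of_dist_le_mul_rpow {X Y : Type*} [PseudoMetricSpace X] [PseudoMetricSpace Y]
    {f : X → Y} {C α : ℝ} (hα : 0 < α) (hf : ∀ x y, dist (f x) (f y) ≤ C * dist x y ^ α) :
    Continuous f := by
  refine continuous_iff_continuousAt.2 fun x => tendsto_iff_dist_tendsto_zero.2 ?_
  refine squeeze_zero (fun _ => dist_nonneg) (fun y => hf y x) ?_
  have hbound : Continuous fun y => C * dist y x ^ α :=
    continuous_const.mul ((continuous_id.dist continuous_const).rpow_const fun _ => Or.inr hα.le)
  simpa [Real.zero_rpow hα.ne'] using hbound.tendsto x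

theorem Real.abs_exp_sub_exp_le_of_le {a b M : ℝ} (ha : a ≤ M) (hb : b ≤ M) :
    |Real.exp a - Real.exp b| ≤ Real.exp M * |a - b| := by
  have hbound : ∀ x ∈ Iic M, ‖Real.exp x‖ ≤ Real.exp M := fun x hx => by
    rw [Real.norm_eq_abs, abs_of_pos (Real.exp_pos x)]
    exact Real.exp_le_exp.2 hx
  simpa [Real.norm_eq_abs] using Convex.norm_image_sub_le_of_norm_hasDerivWithin_le
    (fun x _ => (Real.hasDerivAt_exp x).hasDerivWithinAt) hbound (convex_Iic M) hb ha

theorem abs_comp_sub_le_mul_rpow {g φ : ℝ → ℝ} {K L α : ℝ} (hK : 0 ≤ K) (hL : 0 ≤ L)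
    (hα : 0 ≤ α) (hg : ∀ a b, |g a - g b| ≤ K * |a - b| ^ α)
    (hφ : ∀ u v, |φ u - φ v| ≤ L * |u - v|) (u v : ℝ) :
    |g (φ u) - g (φ v)| ≤ K * L ^ α * |u - v| ^ α :=
  calc |g (φ u) - g (φ v)| ≤ K * |φ u - φ v| ^ α := hg _ _
    _ ≤ K * (L * |u - v|) ^ α := by gcongr; exact hφ u v
    _ = K * L ^ α * |u - v| ^ α := by rw [Real.mul_rpow hL (abs_nonneg _), mul_assoc]

section DerivBoundedBelow

variable {f f' : ℝ → ℝ} {m : ℝ}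

theorem mul_sub_le_sub_of_le_deriv (hf : ∀ x, HasDerivAt f (f' x) x) (hm : ∀ x, m ≤ f' x)
    ⦃x y : ℝ⦄ (hxy : x ≤ y) : m * (y - x) ≤ f y - f x :=
  mul_sub_le_image_sub_of_le_deriv (fun x => (hf x).differentiableAt)
    (fun x => (hf x).deriv ▸ hm x) hxy

theorem mul_abs_sub_le_abs_sub_of_le_deriv (hf : ∀ x, HasDerivAt f (f' x) x)
    (hm : ∀ x, m ≤ f' x) (x y : ℝ) : m * |x - y| ≤ |f x - f y| := by
  have key := mul_sub_le_sub_of_le_deriv hf hm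
  rcases le_total x y with hxy | hyx
  · rw [abs_sub_comm x, abs_sub_comm (f x), abs_of_nonneg (sub_nonneg.2 hxy)]
    exact (key hxy).trans (le_abs_self _)
  · rw [abs_of_nonneg (sub_nonneg.2 hyx)]
    exact (key hyx).trans (le_abs_self _)

theorem surjective_of_le_deriv (hf : ∀ x, HasDerivAt f (f' x) x) (hm : ∀ x, m ≤ f' x)
    (hm_pos : 0 < m) : Surjective f := by
  have key := mul_sub_le_sub_of_le_deriv hf hm
  refine Continuous.surjective (continuous_iff_continuousAt.2 fun x => (hf x).continuousAt) ?_ ?_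
  · refine tendsto_atTop_mono' _ ?_
      (tendsto_atTop_add_const_left _ (f 0) (tendsto_id.const_mul_atTop hm_pos))
    filter_upwards [eventually_ge_atTop 0] with x hx
    rw [id]
    linarith [key hx]
  · refine tendsto_atBot_mono' _ ?_
      (tendsto_atBot_add_const_left _ (f 0) (tendsto_id.const_mul_atBot hm_pos))
    filter_upwards [eventually_le_atBot 0] with x hx
    rw [id]
    linarith [key hx]

theorem bijective_of_le_deriv (hf : ∀ x, HasDerivAt f (f' x) x) (hm : ∀ x, m ≤ f' x)
    (hm_pos : 0 < m) : Bijective f :=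
  ⟨(strictMono_of_deriv_pos fun x => (hf x).deriv ▸ hm_pos.trans_le (hm x)).injective,
    surjective_of_le_deriv hf hm hm_pos⟩

theorem abs_invFun_sub_le_of_le_deriv (hf : ∀ x, HasDerivAt f (f' x) x) (hm : ∀ x, m ≤ f' x)
    (hm_pos : 0 < m) (u v : ℝ) : |invFun f u - invFun f v| ≤ m⁻¹ * |u - v| := by
  have hri := rightInverse_invFun (surjective_of_le_deriv hf hm hm_pos)
  have key := mul_abs_sub_le_abs_sub_of_le_deriv hf hm (invFun f u) (invFun f v)
  rw [hri u, hri v] at key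
  rw [inv_mul_eq_div, le_div_iff₀ hm_pos, mul_comm]
  exact key

theorem hasDerivAt_invFun_of_le_deriv (hf : ∀ x, HasDerivAt f (f' x) x) (hm : ∀ x, m ≤ f' x)
    (hm_pos : 0 < m) (u : ℝ) : HasDerivAt (invFun f) (f' (invFun f u))⁻¹ u := by
  have hlip : LipschitzWith (Real.toNNReal m⁻¹) (invFun f) :=
    LipschitzWith.of_dist_le_mul fun u v => by
      rw [Real.coe_toNNReal _ (inv_nonneg.2 hm_pos.le), Real.dist_eq, Real.dist_eq]
      exact abs_invFun_sub_le_of_le_deriv hf hm hm_pos u v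
  exact HasDerivAt.of_local_left_inverse hlip.continuous.continuousAt (hf _)
    (hm_pos.trans_le (hm _)).ne' (Eventually.of_forall
      (rightInverse_invFun (surjective_of_le_deriv hf hm hm_pos)))

end DerivBoundedBelow

/-- Let `α ∈ (0,1]` and let `Σ : ℝ → ℝ` be bounded and globally
`α`-Hölder continuous with constant `C₂`.  With `h x = ∫_0^x e^{-Σ(y)} dy`, `h` is a
C¹ bijection of `ℝ`, its inverse is differentiable with
`(h⁻¹)'(u) = e^{Σ(h⁻¹ u)}`, and `(h⁻¹)'` is globally `α`-Hölder continuous with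
constant `C₂ e^{(1+α)‖Σ‖_∞}`. -/
theorem stmt_11 (α C₂ : ℝ) (hα : α ∈ Set.Ioc (0:ℝ) 1)
    (S : ℝ → ℝ) (hSb : ∃ C : ℝ, ∀ x, |S x| ≤ C)
    (hSH : ∀ u v : ℝ, |S u - S v| ≤ C₂ * |u - v| ^ α) :
    let h : ℝ → ℝ := fun x => ∫ y in (0:ℝ)..x, Real.exp (-S y)
    ContDiff ℝ 1 h ∧ Function.Bijective h ∧
    (∀ u : ℝ, HasDerivAt (Function.invFun h)
      (Real.exp (S (Function.invFun h u))) u) ∧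
    (∀ u v : ℝ, |Real.exp (S (Function.invFun h u)) - Real.exp (S (Function.invFun h v))| ≤
      C₂ * Real.exp ((1 + α) * (⨆ x : ℝ, |S x|)) * |u - v| ^ α) := by
  intro h
  set M := ⨆ x, |S x|
  obtain ⟨C, hC⟩ := hSb
  have hSM : ∀ x, S x ≤ M := fun x =>
    (le_abs_self _).trans (le_ciSup ⟨C, forall_mem_range.2 hC⟩ x)
  have hS : Continuous S :=
    continuous_of_dist_le_mul_rpow hα.1 (by simpa only [Real.dist_eq] using hSH)
  have hexpS : Continuous fun y => Real.exp (-S y) := by fun_prop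
  have hderiv : ∀ x, HasDerivAt h (Real.exp (-S x)) x := fun x =>
    (hexpS.integral_hasStrictDerivAt 0 x).hasDerivAt
  have hlow : ∀ x, Real.exp (-M) ≤ Real.exp (-S x) := fun x => by
    simpa only [Real.exp_le_exp, neg_le_neg_iff] using hSM x
  have hC₂ : 0 ≤ C₂ := by simpa using (abs_nonneg _).trans (hSH 0 1)
  refine ⟨contDiff_one_iff_deriv.2 ⟨fun x => (hderiv x).differentiableAt, ?_⟩,
    bijective_of_le_deriv hderiv hlow (Real.exp_pos _), fun u => ?_, fun u v => ?_⟩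
  · simpa only [funext fun x => (hderiv x).deriv] using hexpS
  · simpa [← Real.exp_neg] using hasDerivAt_invFun_of_le_deriv hderiv hlow (Real.exp_pos _) u
  · have hexpS_holder : ∀ a b, |Real.exp (S a) - Real.exp (S b)| ≤
        Real.exp M * C₂ * |a - b| ^ α := fun a b =>
      (Real.abs_exp_sub_exp_le_of_le (hSM a) (hSM b)).trans <| by
        rw [mul_assoc]; gcongr; exact hSH a b
    have hinv : ∀ u v, |invFun h u - invFun h v| ≤ Real.exp M * |u - v| := by
      simpa [← Real.exp_neg] using abs_invFun_sub_le_of_le_deriv hderiv hlow (Real.exp_pos _)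
    calc _ ≤ Real.exp M * C₂ * Real.exp M ^ α * |u - v| ^ α :=
          abs_comp_sub_le_mul_rpow (by positivity) (Real.exp_pos M).le hα.1.le hexpS_holder hinv u v
      _ = C₂ * Real.exp ((1 + α) * M) * |u - v| ^ α := by
          rw [← Real.exp_mul, add_mul, one_mul, Real.exp_add, mul_comm M α]; ring
end

section
/- Let α ∈ (0,1], let Σ : ℝ → ℝ be bounded and α-Hölder continuous on ℝ with Hölder constant C₂, and define h(x) = ∫_{0}^{x} e^{-Σ(y)} dy, so that h is a C¹ bijection of ℝ with bounded derivative and Lipschitz inverse. Let Q be a transition kernel from ℝ to ℝ with Q(y,{0}) = 0 satisfying sup_{y ∈ ℝ} ∫_ℝ (1 ∧ |x|^{1+α}) Q(y,dx) < ∞, let F(y,A) := ∫_ℝ 1_A( h(h⁻¹(y) + w) - h(h⁻¹(y)) ) Q(h⁻¹(y), dw), and let k : ℝ → ℝ be a truncation function with k(z) = z for |z| ≤ R. Then the function b : ℝ → ℝ defined by b(y) := h'(h⁻¹(y)) · ∫_ℝ [ (h⁻¹)'(y) k(z) - k( h⁻¹(y + z) - h⁻¹(y) ) ] F(y,dz)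 is well-defined and bounded on ℝ. -/
open MeasureTheory ProbabilityTheory Set Filter

lemma aux_exp (s : ℝ) : |Real.exp s - 1| ≤ |s| * Real.exp |s| := by
  rcases le_or_gt 0 s with hs | hs
  · rw [abs_of_nonneg hs,
      abs_of_nonneg (by linarith [Real.add_one_le_exp s] : (0:ℝ) ≤ Real.exp s - 1)]
    have h1 : 1 - s ≤ Real.exp (-s) := by linarith [Real.add_one_le_exp (-s)]
    have h2 := mul_le_mul_of_nonneg_left h1 (Real.exp_pos s).le
    rw [← Real.exp_add] at h2
    simp at h2
    nlinarith
  · rw [abs_of_neg hs,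
      abs_of_nonpos (by linarith [Real.exp_lt_one_iff.mpr hs] : Real.exp s - 1 ≤ 0)]
    have h1 : s + 1 ≤ Real.exp s := Real.add_one_le_exp s
    have h2 : (1:ℝ) ≤ Real.exp (-s) := Real.one_le_exp (by linarith)
    nlinarith

/-- Let `α ∈ (0,1]`, `Σ : ℝ → ℝ` bounded and globally `α`-Hölder
with constant `C₂`, and `h x = ∫_0^x e^{-Σ(y)} dy` (a C¹ bijection with bounded
derivative and Lipschitz inverse).  Let `Q` be a transition kernel with `Q y {0} = 0`
and `sup_y ∫ (1 ∧ |x|^{1+α}) Q(y,dx) < ∞`, let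
`F(y,·)` be the pushforward of `Q(h⁻¹(y),·)` by `w ↦ h(h⁻¹(y)+w) - h(h⁻¹(y))`, and
let `k` be a truncation function with `k z = z` for `|z| ≤ R`.  Then
`b(y) := h'(h⁻¹(y)) ∫ [(h⁻¹)'(y) k(z) - k(h⁻¹(y+z) - h⁻¹(y))] F(y,dz)` is
well defined (the integrand is `F(y,·)`-integrable) and bounded on `ℝ`.
Here `h'(x) = e^{-Σ(x)}` and `(h⁻¹)'(y) = e^{Σ(h⁻¹(y))}`. -/
theorem stmt_14 (α C₂ : ℝ) (hα : α ∈ Set.Ioc (0:ℝ) 1)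
    (S : ℝ → ℝ) (hSb : ∃ C : ℝ, ∀ x, |S x| ≤ C)
    (hSH : ∀ u v : ℝ, |S u - S v| ≤ C₂ * |u - v| ^ α)
    (Q : Kernel ℝ ℝ) (hQ0 : ∀ y : ℝ, Q y ({0} : Set ℝ) = 0)
    (hKbdd : ∃ K : ℝ, ∀ y : ℝ,
      ∫⁻ x, ENNReal.ofReal (min 1 (|x| ^ (1 + α))) ∂(Q y) ≤ ENNReal.ofReal K)
    (k : ℝ → ℝ) (R : ℝ) (hR : 0 < R) (hR1 : R ≤ 1) (hkm : Measurable k)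
    (hkb : ∃ C : ℝ, ∀ z, |k z| ≤ C) (hkx : ∀ z : ℝ, |z| ≤ R → k z = z) :
    let h : ℝ → ℝ := fun x => ∫ y in (0:ℝ)..x, Real.exp (-S y)
    let hinv := Function.invFun h
    let F : ℝ → Measure ℝ := fun y =>
      (Q (hinv y) : Measure ℝ).map (fun w => h (hinv y + w) - h (hinv y))
    (∀ y : ℝ, Integrable
      (fun z => Real.exp (S (hinv y)) * k z - k (hinv (y + z) - hinv y)) (F y)) ∧
    ∃ C : ℝ, ∀ y : ℝ,
      |Real.exp (-S (hinv y)) *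
        ∫ z, (Real.exp (S (hinv y)) * k z - k (hinv (y + z) - hinv y)) ∂(F y)| ≤ C := by
  intro h hinv F
  obtain ⟨hα0, hα1⟩ := hα
  obtain ⟨C₀, hC₀⟩ := hSb
  obtain ⟨K, hK⟩ := hKbdd
  obtain ⟨Ck₀, hCk₀⟩ := hkb
  set C : ℝ := max C₀ 0 with hCdef
  have hC : ∀ x, |S x| ≤ C := fun x => (hC₀ x).trans (le_max_left _ _)
  have hC0 : (0:ℝ) ≤ C := le_max_right _ _
  set Ck : ℝ := max Ck₀ 0 with hCkdef
  have hCk : ∀ z, |k z| ≤ Ck := fun z => (hCk₀ z).trans (le_max_left _ _)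
  have hCk0 : (0:ℝ) ≤ Ck := le_max_right _ _
  have hC₂0 : (0:ℝ) ≤ C₂ := by
    have := hSH 0 1
    simp at this
    exact le_trans (abs_nonneg _) this
  -- continuity of S
  have hScont : Continuous S := by
    rw [continuous_iff_continuousAt]
    intro x
    have hb : Tendsto (fun u : ℝ => C₂ * |u - x| ^ α) (nhds x) (nhds 0) := by
      have hc : ContinuousAt (fun u : ℝ => C₂ * |u - x| ^ α) x :=
        continuousAt_const.mul ((Real.continuousAt_rpow_const _ _ (Or.inr hα0.le)).comp
          ((continuous_abs.comp (continuous_id.sub continuous_const)).continuousAt))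
      have : (fun u : ℝ => C₂ * |u - x| ^ α) x = 0 := by
        simp [Real.zero_rpow hα0.ne']
      rw [← this]
      exact hc
    have hsq : Tendsto (fun u => S u - S x) (nhds x) (nhds 0) :=
      squeeze_zero_norm (fun u => by simpa using hSH u x) hb
    have := hsq.add_const (S x)
    simpa [ContinuousAt] using this
  have hexp_cont : Continuous fun u : ℝ => Real.exp (-S u) :=
    Real.continuous_exp.comp hScont.neg
  have hii : ∀ a b : ℝ, IntervalIntegrable (fun u => Real.exp (-S u)) volume a b :=
    fun a b => hexp_cont.intervalIntegrable a b
  have hdiff : ∀ a b : ℝ, h b - h a = ∫ u in a..b, Real.exp (-S u) := by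
    intro a b
    have := intervalIntegral.integral_add_adjacent_intervals (hii 0 a) (hii a b)
    simp only [h]
    linarith
  have hbd : ∀ u : ℝ, Real.exp (-C) ≤ Real.exp (-S u) ∧ Real.exp (-S u) ≤ Real.exp C := by
    intro u
    have := abs_le.mp (hC u)
    constructor
    · exact Real.exp_le_exp.mpr (by linarith)
    · exact Real.exp_le_exp.mpr (by linarith)
  have hkey : ∀ a b : ℝ, a ≤ b →
      Real.exp (-C) * (b - a) ≤ h b - h a := by
    intro a b hab
    rw [hdiff a b]
    have := intervalIntegral.integral_mono_on (μ := volume) hab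
      (intervalIntegrable_const (c := Real.exp (-C))) (hii a b)
      (fun u _ => (hbd u).1)
    simpa [mul_comm] using this
  have hub : ∀ a b : ℝ, |h b - h a| ≤ Real.exp C * |b - a| := by
    intro a b
    rw [hdiff a b]
    have := intervalIntegral.norm_integral_le_of_norm_le_const
      (a := a) (b := b) (C := Real.exp C) (f := fun u => Real.exp (-S u))
      (fun u _ => by
        rw [Real.norm_eq_abs, abs_of_pos (Real.exp_pos _)]; exact (hbd u).2)
    simpa [Real.norm_eq_abs, abs_sub_comm b a] using this
  have hSM : StrictMono h := by
    intro a b hab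
    have := hkey a b hab.le
    have h1 : 0 < Real.exp (-C) * (b - a) := mul_pos (Real.exp_pos _) (sub_pos.mpr hab)
    linarith
  have hcont : Continuous h := by
    rw [Metric.continuous_iff]
    intro x ε hε
    refine ⟨ε / Real.exp C, by positivity, fun a ha => ?_⟩
    have := hub x a
    rw [Real.dist_eq] at *
    calc |h a - h x| ≤ Real.exp C * |a - x| := hub x a
      _ < Real.exp C * (ε / Real.exp C) := by
          apply mul_lt_mul_of_pos_left ha (Real.exp_pos _)
      _ = ε := by field_simp
  have h0 : h 0 = 0 := by simp [h]
  have htop : Tendsto h atTop atTop := by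
    apply tendsto_atTop_mono' _ _ ((tendsto_id.const_mul_atTop (Real.exp_pos (-C))))
    filter_upwards [eventually_ge_atTop (0:ℝ)] with x hx
    have := hkey 0 x hx
    simp only [h0, sub_zero] at this
    simpa using this
  have hbot : Tendsto h atBot atBot := by
    apply tendsto_atBot_mono' _ _ ((tendsto_id.const_mul_atBot (Real.exp_pos (-C))))
    filter_upwards [eventually_le_atBot (0:ℝ)] with x hx
    have := hkey x 0 hx
    simp only [h0] at this
    have h2 : Real.exp (-C) * (0 - x) = -(Real.exp (-C) * x) := by ring
    rw [h2] at this
    simp only [id_eq]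
    linarith
  have hsurj : Function.Surjective h := hcont.surjective htop hbot
  have hinj : Function.Injective h := hSM.injective
  have hleft : ∀ x : ℝ, hinv (h x) = x := fun x => Function.leftInverse_invFun hinj x
  have hright : ∀ y : ℝ, h (hinv y) = y := fun y => Function.rightInverse_invFun hsurj y
  have hinv_mono : Monotone hinv := by
    intro a b hab
    rw [← hSM.le_iff_le, hright, hright]
    exact hab
  have hinv_meas : Measurable hinv := hinv_mono.measurable
  -- constants
  set r : ℝ := R * Real.exp (-C) with hrdef
  have hr0 : 0 < r := by positivity
  have hr1 : r ≤ 1 := by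
    have : Real.exp (-C) ≤ 1 := Real.exp_le_one_iff.mpr (by linarith)
    nlinarith
  set M : ℝ := max (C₂ * Real.exp C₂) ((Real.exp C + 1) * Ck / r ^ (1 + α)) with hMdef
  have hrp : 0 < r ^ (1 + α) := Real.rpow_pos_of_pos hr0 _
  have hM0 : 0 ≤ M := le_trans (by positivity) (le_max_left _ _)
  -- pointwise bound, for arbitrary base point x
  have hGbound : ∀ x w : ℝ,
      |Real.exp (S x) * k (h (x + w) - h x) - k w| ≤ M * min 1 (|w| ^ (1 + α)) := by
    intro x w
    have hmin_nonneg : 0 ≤ min 1 (|w| ^ (1 + α)) :=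
      le_min zero_le_one (Real.rpow_nonneg (abs_nonneg w) _)
    rcases le_or_gt |w| r with hw | hw
    · -- small jump case
      have hw1 : |w| ≤ 1 := hw.trans hr1
      have hTw : |h (x + w) - h x| ≤ Real.exp C * |w| := by
        simpa using hub x (x + w)
      have hTwR : |h (x + w) - h x| ≤ R := by
        calc |h (x + w) - h x| ≤ Real.exp C * |w| := hTw
          _ ≤ Real.exp C * (R * Real.exp (-C)) :=
              mul_le_mul_of_nonneg_left hw (Real.exp_pos _).le
          _ = R := by rw [← mul_assoc, mul_comm (Real.exp C) R, mul_assoc,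
              ← Real.exp_add]; simp
      have hexpCle : Real.exp (-C) ≤ 1 := Real.exp_le_one_iff.mpr (by linarith)
      have hwR : |w| ≤ R := hw.trans (by rw [hrdef]; nlinarith)
      rw [hkx _ hTwR, hkx _ hwR]
      -- rewrite as an integral
      have e1 : Real.exp (S x) * (h (x + w) - h x) - w
          = ∫ u in x..(x + w), (Real.exp (S x - S u) - 1) := by
        rw [hdiff x (x + w)]
        rw [intervalIntegral.integral_sub (by
            apply Continuous.intervalIntegrable
            exact Real.continuous_exp.comp (continuous_const.sub hScont))
          (intervalIntegrable_const (c := (1:ℝ)))]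
        rw [← intervalIntegral.integral_const_mul]
        congr 1
        · congr 1; funext u; rw [← Real.exp_add]; ring_nf
        · simp
      have hbnd : ∀ u ∈ Set.uIoc x (x + w), ‖Real.exp (S x - S u) - 1‖
          ≤ C₂ * Real.exp C₂ * |w| ^ α := by
        intro u hu
        have hux : |x - u| ≤ |w| := by
          rcases le_or_gt 0 w with hw0 | hw0
          · rw [Set.uIoc_of_le (by linarith)] at hu
            rw [abs_of_nonneg hw0, abs_of_nonpos (by linarith [hu.1] : x - u ≤ 0)]
            linarith [hu.1, hu.2]
          · rw [Set.uIoc_of_ge (by linarith)] at hu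
            rw [abs_of_neg hw0, abs_of_nonneg (by linarith [hu.2] : 0 ≤ x - u)]
            linarith [hu.1, hu.2]
        have hS1 : |S x - S u| ≤ C₂ * |w| ^ α := by
          refine (hSH x u).trans ?_
          exact mul_le_mul_of_nonneg_left
            (Real.rpow_le_rpow (abs_nonneg _) hux hα0.le) hC₂0
        have hwα1 : |w| ^ α ≤ 1 := Real.rpow_le_one (abs_nonneg w) hw1 hα0.le
        have hS2 : |S x - S u| ≤ C₂ := hS1.trans (by nlinarith)
        calc ‖Real.exp (S x - S u) - 1‖ = |Real.exp (S x - S u) - 1| := rfl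
          _ ≤ |S x - S u| * Real.exp |S x - S u| := aux_exp _
          _ ≤ (C₂ * |w| ^ α) * Real.exp C₂ := by
              apply mul_le_mul hS1 (Real.exp_le_exp.mpr hS2) (Real.exp_pos _).le
              positivity
          _ = C₂ * Real.exp C₂ * |w| ^ α := by ring
      have := intervalIntegral.norm_integral_le_of_norm_le_const hbnd
      simp only [add_sub_cancel_left] at this
      have e2 : C₂ * Real.exp C₂ * |w| ^ α * |w| = C₂ * Real.exp C₂ * |w| ^ (1 + α) := by
        rw [Real.rpow_add' (abs_nonneg w) (by linarith), Real.rpow_one]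
        ring
      have hminw : min 1 (|w| ^ (1 + α)) = |w| ^ (1 + α) :=
        min_eq_right (Real.rpow_le_one (abs_nonneg w) hw1 (by linarith))
      rw [Real.norm_eq_abs] at this
      calc |Real.exp (S x) * (h (x + w) - h x) - w|
          = |∫ u in x..(x + w), (Real.exp (S x - S u) - 1)| := by rw [e1]
        _ ≤ C₂ * Real.exp C₂ * |w| ^ α * |w| := this
        _ = C₂ * Real.exp C₂ * |w| ^ (1 + α) := e2
        _ ≤ M * min 1 (|w| ^ (1 + α)) := by
            rw [hminw]
            exact mul_le_mul_of_nonneg_right (le_max_left _ _)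
              (Real.rpow_nonneg (abs_nonneg w) _)
    · -- big jump case
      have hgb : |Real.exp (S x) * k (h (x + w) - h x) - k w|
          ≤ (Real.exp C + 1) * Ck := by
        have h1 : |Real.exp (S x) * k (h (x + w) - h x)| ≤ Real.exp C * Ck := by
          rw [abs_mul, abs_of_pos (Real.exp_pos _)]
          apply mul_le_mul _ (hCk _) (abs_nonneg _) (Real.exp_pos _).le
          exact Real.exp_le_exp.mpr (le_trans (le_abs_self _) (hC x))
        calc |Real.exp (S x) * k (h (x + w) - h x) - k w|
            ≤ |Real.exp (S x) * k (h (x + w) - h x)| + |k w| := by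
              have := abs_add_le (Real.exp (S x) * k (h (x + w) - h x)) (-(k w))
              simpa [sub_eq_add_neg] using this
          _ ≤ Real.exp C * Ck + Ck := add_le_add h1 (hCk w)
          _ = (Real.exp C + 1) * Ck := by ring
      have hminr : r ^ (1 + α) ≤ min 1 (|w| ^ (1 + α)) := by
        apply le_min
        · exact Real.rpow_le_one hr0.le hr1 (by linarith)
        · exact Real.rpow_le_rpow hr0.le hw.le (by linarith)
      calc |Real.exp (S x) * k (h (x + w) - h x) - k w|
          ≤ (Real.exp C + 1) * Ck := hgb
        _ = ((Real.exp C + 1) * Ck / r ^ (1 + α)) * r ^ (1 + α) := by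
            field_simp
        _ ≤ M * min 1 (|w| ^ (1 + α)) := by
            apply mul_le_mul (le_max_right _ _) hminr hrp.le hM0
  -- measurability of min function
  have hmin_cont : Continuous fun w : ℝ => min 1 (|w| ^ (1 + α)) := by
    apply continuous_const.min
    rw [continuous_iff_continuousAt]
    intro w
    exact (Real.continuousAt_rpow_const _ _ (Or.inr (by linarith))).comp
      continuous_abs.continuousAt
  -- now for each y, the change of variables
  have main : ∀ y : ℝ,
      Integrable (fun z => Real.exp (S (hinv y)) * k z - k (hinv (y + z) - hinv y)) (F y)
      ∧ |Real.exp (-S (hinv y)) *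
        ∫ z, (Real.exp (S (hinv y)) * k z - k (hinv (y + z) - hinv y)) ∂(F y)|
        ≤ Real.exp C * (M * max K 0) := by
    intro y
    set x : ℝ := hinv y with hxdef
    set T : ℝ → ℝ := fun w => h (x + w) - h x with hTdef
    have hTcont : Continuous T := (hcont.comp (continuous_const.add continuous_id)).sub
      continuous_const
    set f : ℝ → ℝ := fun z => Real.exp (S x) * k z - k (hinv (y + z) - hinv y) with hfdef
    set g : ℝ → ℝ := fun w => Real.exp (S x) * k (T w) - k w with hgdef
    have hfmeas : Measurable f := by
      apply Measurable.sub
      · exact measurable_const.mul hkm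
      · exact hkm.comp ((hinv_meas.comp (measurable_const.add measurable_id)).sub
          measurable_const)
    have hgmeas : Measurable g :=
      (measurable_const.mul (hkm.comp hTcont.measurable)).sub hkm
    have hfT : ∀ w, f (T w) = g w := by
      intro w
      have hyT : y + T w = h (x + w) := by
        have h1 : h x = y := by rw [hxdef]; exact hright y
        simp only [hTdef]
        linarith
      simp only [hfdef, hgdef, hyT, hleft]
      norm_num
      rw [← hxdef]; simp
    have hFy : F y = (Q x).map T := rfl
    -- integrability of g
    have hgint : Integrable g (Q x) := by
      constructor
      · exact hgmeas.aestronglyMeasurable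
      · rw [hasFiniteIntegral_iff_norm]
        calc ∫⁻ w, ENNReal.ofReal ‖g w‖ ∂(Q x)
            ≤ ∫⁻ w, ENNReal.ofReal (M * min 1 (|w| ^ (1 + α))) ∂(Q x) := by
              apply lintegral_mono
              intro w
              apply ENNReal.ofReal_le_ofReal
              exact hGbound x w
          _ = ∫⁻ w, ENNReal.ofReal M * ENNReal.ofReal (min 1 (|w| ^ (1 + α))) ∂(Q x) := by
              congr 1
              funext w
              rw [← ENNReal.ofReal_mul hM0]
          _ = ENNReal.ofReal M * ∫⁻ w, ENNReal.ofReal (min 1 (|w| ^ (1 + α))) ∂(Q x) :=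
              lintegral_const_mul _ hmin_cont.measurable.ennreal_ofReal
          _ ≤ ENNReal.ofReal M * ENNReal.ofReal K :=
              mul_le_mul_right (hK x) _
          _ < ⊤ := by
              exact ENNReal.mul_lt_top ENNReal.ofReal_lt_top ENNReal.ofReal_lt_top
    have hfint : Integrable f (F y) := by
      rw [hFy, integrable_map_measure hfmeas.aestronglyMeasurable
        hTcont.measurable.aemeasurable]
      have : f ∘ T = g := funext hfT
      rw [this]
      exact hgint
    refine ⟨hfint, ?_⟩
    have hIeq : ∫ z, f z ∂(F y) = ∫ w, g w ∂(Q x) := by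
      rw [hFy, integral_map hTcont.measurable.aemeasurable hfmeas.aestronglyMeasurable]
      exact integral_congr_ae (Filter.Eventually.of_forall hfT)
    have hIbound : |∫ w, g w ∂(Q x)| ≤ M * max K 0 := by
      have h1 : ‖∫ w, g w ∂(Q x)‖ ≤ (∫⁻ w, ENNReal.ofReal ‖g w‖ ∂(Q x)).toReal :=
        norm_integral_le_lintegral_norm g
      have h2 : (∫⁻ w, ENNReal.ofReal ‖g w‖ ∂(Q x)) ≤ ENNReal.ofReal (M * max K 0) := by
        calc ∫⁻ w, ENNReal.ofReal ‖g w‖ ∂(Q x)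
            ≤ ∫⁻ w, ENNReal.ofReal (M * min 1 (|w| ^ (1 + α))) ∂(Q x) := by
              apply lintegral_mono
              intro w
              exact ENNReal.ofReal_le_ofReal (hGbound x w)
          _ = ∫⁻ w, ENNReal.ofReal M * ENNReal.ofReal (min 1 (|w| ^ (1 + α))) ∂(Q x) := by
              congr 1
              funext w
              rw [← ENNReal.ofReal_mul hM0]
          _ = ENNReal.ofReal M * ∫⁻ w, ENNReal.ofReal (min 1 (|w| ^ (1 + α))) ∂(Q x) :=
              lintegral_const_mul _ hmin_cont.measurable.ennreal_ofReal
          _ ≤ ENNReal.ofReal M * ENNReal.ofReal K := mul_le_mul_right (hK x) _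
          _ ≤ ENNReal.ofReal M * ENNReal.ofReal (max K 0) :=
              mul_le_mul_right (ENNReal.ofReal_le_ofReal (le_max_left _ _)) _
          _ = ENNReal.ofReal (M * max K 0) :=
              (ENNReal.ofReal_mul hM0).symm
      have := ENNReal.toReal_le_of_le_ofReal (by positivity) h2
      rw [← Real.norm_eq_abs]
      exact h1.trans this
    rw [hIeq]
    rw [abs_mul, abs_of_pos (Real.exp_pos _)]
    have hexpC : Real.exp (-S x) ≤ Real.exp C := by
      apply Real.exp_le_exp.mpr
      have := abs_le.mp (hC x)
      linarith
    exact mul_le_mul hexpC hIbound (abs_nonneg _) (Real.exp_pos _).le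
  exact ⟨fun y => (main y).1, ⟨Real.exp C * (M * max K 0), fun y => (main y).2⟩⟩
end
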